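/- arXiv:1506.02774 — 5 statements merged into one kernel-verified Lean document; each statement's English description precedes it below -/
import Mathlib

section
/- Let a₁, a₂, b₁, b₂, c₁, c₂, m₁, m₂ be positive reals, m₃ ≥ 0, α > 0, β a nonzero real, with a₁ > α²/2; set q := 2a₁/α² − 1, a := 2b₁/α², and λ := −a₂ − β²/2 + (a^q/Γ(q))·∫₀^∞ c₂·x^q·e^{−a·x}/(m₁ + m₂·x) dx. Define h(u,z) := −(a₂ + β²/2 + (β/α)(a₁ − α²/2)) − b₂·e^z·e^{(β/α)u} + (β/α)·b₁·e^u + (c₂·e^u + (β/α)·c₁·e^{z + (β/α)u})/(m₁ + m₂·e^u + m₃·e^{z + (β/α)u}). If λ > 0, then with ū := ln((a₁ − α²/2)/b₁) there exists z̄ ∈ ℝ such that h(ū, z) > 0 for all z ≤ z̄. -/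
/-!
Write `μ = (a₁ - α²/2)/b₁ = exp ū`. With `q`, `a` as in the statement, `μ = q/a` is the mean of the
Gamma law with shape `q` and rate `a`, and `(a^q/Γ(q)) ∫ c₂ x^q e^{-ax}/(m₁ + m₂x) dx` is the
expectation of the concave function `c₂x/(m₁ + m₂x)` under that law. Integrating the tangent line
at the mean (Jensen) bounds it by `c₂μ/(m₁ + m₂μ)`, so `λ > 0` gives `a₂ + β²/2 < c₂μ/(m₁ + m₂μ)`.
As `z → -∞` the terms of `h(ū, z)` carrying `e^z` vanish and `(β/α) b₁ μ` cancels
`(β/α)(a₁ - α²/2)`, so `h(ū, z)` tends to `c₂μ/(m₁ + m₂μ) - a₂ - β²/2 > 0`.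
-/

open MeasureTheory Set Filter Topology ProbabilityTheory

lemma setIntegral_mul_le_of_le_tangent {ν : Measure ℝ} {s : Set ℝ} {w g : ℝ → ℝ} {x₀ B : ℝ}
    (hw : IntegrableOn w s ν) (hxw : IntegrableOn (fun x => x * w x) s ν)
    (hw_nonneg : ∀ x ∈ s, 0 ≤ w x) (hg_nonneg : ∀ x ∈ s, 0 ≤ g x)
    (hg_tangent : ∀ x ∈ s, g x ≤ g x₀ + B * (x - x₀))
    (hw_one : ∫ x in s, w x ∂ν = 1) (hw_mean : ∫ x in s, x * w x ∂ν = x₀) :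
    ∫ x in s, g x * w x ∂ν ≤ g x₀ := by
  have hrhs : IntegrableOn (fun x => (g x₀ - B * x₀) * w x + B * (x * w x)) s ν :=
    (hw.const_mul _).add (hxw.const_mul _)
  calc ∫ x in s, g x * w x ∂ν
      ≤ ∫ x in s, ((g x₀ - B * x₀) * w x + B * (x * w x)) ∂ν := by
        refine setIntegral_mono_of_nonneg (fun x hx => mul_nonneg (hg_nonneg x hx) (hw_nonneg x hx))
          (fun x hx => ?_) hrhs
        nlinarith [mul_le_mul_of_nonneg_right (hg_tangent x hx) (hw_nonneg x hx)]
    _ = g x₀ := by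
        rw [integral_add (hw.const_mul _) (hxw.const_mul _), integral_const_mul,
          integral_const_mul, hw_one, hw_mean]
        ring

lemma div_le_tangent {c m₁ m₂ x μ : ℝ} (hc : 0 ≤ c) (hm₁ : 0 < m₁) (hm₂ : 0 ≤ m₂)
    (hx : 0 ≤ x) (hμ : 0 ≤ μ) :
    c * x / (m₁ + m₂ * x) ≤ c * μ / (m₁ + m₂ * μ) + c * m₁ / (m₁ + m₂ * μ) ^ 2 * (x - μ) := by
  have hgap : c * μ / (m₁ + m₂ * μ) + c * m₁ / (m₁ + m₂ * μ) ^ 2 * (x - μ) - c * x / (m₁ + m₂ * x)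
      = c * m₁ * m₂ * (x - μ) ^ 2 / ((m₁ + m₂ * x) * (m₁ + m₂ * μ) ^ 2) := by
    field_simp
    ring
  have : 0 ≤ c * m₁ * m₂ * (x - μ) ^ 2 / ((m₁ + m₂ * x) * (m₁ + m₂ * μ) ^ 2) := by positivity
  linarith

section GammaDistribution

variable {q a : ℝ}

lemma integrableOn_rpow_mul_exp_neg_mul_Ioi {s : ℝ} (hs : -1 < s) (ha : 0 < a) :
    IntegrableOn (fun x : ℝ => x ^ s * Real.exp (-(a * x))) (Ioi 0) := by
  simpa [Real.rpow_one] using integrableOn_rpow_mul_exp_neg_mul_rpow (p := 1) hs one_pos ha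

lemma gammaPDFReal_of_pos {x : ℝ} (hx : 0 < x) :
    gammaPDFReal q a x = a ^ q / Real.Gamma q * (x ^ (q - 1) * Real.exp (-(a * x))) := by
  rw [gammaPDFReal, if_pos hx.le, mul_assoc]

lemma mul_gammaPDFReal_of_pos {x : ℝ} (hx : 0 < x) :
    x * gammaPDFReal q a x = a ^ q / Real.Gamma q * (x ^ q * Real.exp (-(a * x))) := by
  have hxq : x ^ q = x * x ^ (q - 1) := by
    rw [mul_comm, ← Real.rpow_add_one hx.ne', sub_add_cancel]
  rw [gammaPDFReal_of_pos hx, hxq]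
  ring

lemma integrableOn_gammaPDFReal (hq : 0 < q) (ha : 0 < a) :
    IntegrableOn (gammaPDFReal q a) (Ioi 0) :=
  IntegrableOn.congr_fun ((integrableOn_rpow_mul_exp_neg_mul_Ioi (by linarith) ha).const_mul _)
    (fun _ hx => (gammaPDFReal_of_pos hx).symm) measurableSet_Ioi

lemma integrableOn_mul_gammaPDFReal (hq : 0 < q) (ha : 0 < a) :
    IntegrableOn (fun x => x * gammaPDFReal q a x) (Ioi 0) :=
  IntegrableOn.congr_fun ((integrableOn_rpow_mul_exp_neg_mul_Ioi (by linarith) ha).const_mul _)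
    (fun _ hx => (mul_gammaPDFReal_of_pos hx).symm) measurableSet_Ioi

lemma integral_gammaPDFReal_Ioi (hq : 0 < q) (ha : 0 < a) :
    ∫ x in Ioi 0, gammaPDFReal q a x = 1 := by
  rw [setIntegral_congr_fun measurableSet_Ioi (fun _ hx => gammaPDFReal_of_pos hx),
    integral_const_mul, Real.integral_rpow_mul_exp_neg_mul_Ioi hq ha, one_div,
    Real.inv_rpow ha.le]
  have := Real.Gamma_pos_of_pos hq
  have := Real.rpow_pos_of_pos ha q
  field_simp

lemma integral_mul_gammaPDFReal_Ioi (hq : 0 < q) (ha : 0 < a) :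
    ∫ x in Ioi 0, x * gammaPDFReal q a x = q / a := by
  have hΓ := Real.integral_rpow_mul_exp_neg_mul_Ioi (by linarith : 0 < q + 1) ha
  rw [add_sub_cancel_right, Real.Gamma_add_one hq.ne', Real.rpow_add (by positivity),
    Real.rpow_one, one_div, Real.inv_rpow ha.le] at hΓ
  rw [setIntegral_congr_fun measurableSet_Ioi (fun _ hx => mul_gammaPDFReal_of_pos hx),
    integral_const_mul, hΓ]
  have := Real.Gamma_pos_of_pos hq
  have := Real.rpow_pos_of_pos ha q
  field_simp

end GammaDistribution

section GammaJensen

variable {q a c m₁ m₂ : ℝ}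

lemma integral_div_mul_gammaPDFReal_le (hq : 0 < q) (ha : 0 < a) (hc : 0 ≤ c) (hm₁ : 0 < m₁)
    (hm₂ : 0 ≤ m₂) :
    ∫ x in Ioi 0, c * x / (m₁ + m₂ * x) * gammaPDFReal q a x ≤ c * (q / a) / (m₁ + m₂ * (q / a)) :=
  setIntegral_mul_le_of_le_tangent (g := fun x => c * x / (m₁ + m₂ * x))
    (integrableOn_gammaPDFReal hq ha) (integrableOn_mul_gammaPDFReal hq ha)
    (fun x _ => gammaPDFReal_nonneg hq ha x)
    (fun x hx => by have : (0 : ℝ) < x := hx; positivity)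
    (fun x hx => div_le_tangent hc hm₁ hm₂ (le_of_lt hx) (by positivity))
    (integral_gammaPDFReal_Ioi hq ha) (integral_mul_gammaPDFReal_Ioi hq ha)

lemma rpow_div_Gamma_mul_integral_div_le (hq : 0 < q) (ha : 0 < a) (hc : 0 ≤ c) (hm₁ : 0 < m₁)
    (hm₂ : 0 ≤ m₂) :
    a ^ q / Real.Gamma q * ∫ x in Ioi 0, c * x ^ q * Real.exp (-a * x) / (m₁ + m₂ * x)
      ≤ c * (q / a) / (m₁ + m₂ * (q / a)) := by
  rw [← integral_const_mul]
  refine le_of_eq_of_le (setIntegral_congr_fun measurableSet_Ioi fun x hx => ?_)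
    (integral_div_mul_gammaPDFReal_le hq ha hc hm₁ hm₂)
  rw [neg_mul, show c * x / (m₁ + m₂ * x) * gammaPDFReal q a x
      = c / (m₁ + m₂ * x) * (x * gammaPDFReal q a x) by ring, mul_gammaPDFReal_of_pos hx]
  ring

end GammaJensen

theorem stmt5_general (a₁ a₂ b₁ b₂ c₁ c₂ m₁ m₂ m₃ α β : ℝ)
    (hb₁ : 0 < b₁) (hc₂ : 0 < c₂) (hm₁ : 0 < m₁) (hm₂ : 0 < m₂) (hm₃ : 0 ≤ m₃)
    (hα : 0 < α) (ha : a₁ > α ^ 2 / 2) :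
    let q : ℝ := 2 * a₁ / α ^ 2 - 1
    let a : ℝ := 2 * b₁ / α ^ 2
    let lam : ℝ := -a₂ - β ^ 2 / 2 + (a ^ q / Real.Gamma q) *
        ∫ x in Set.Ioi (0 : ℝ), c₂ * x ^ q * Real.exp (-a * x) / (m₁ + m₂ * x)
    let h : ℝ → ℝ → ℝ := fun u z =>
      -(a₂ + β ^ 2 / 2 + (β / α) * (a₁ - α ^ 2 / 2))
        - b₂ * Real.exp z * Real.exp ((β / α) * u)
        + (β / α) * b₁ * Real.exp u
        + (c₂ * Real.exp u + (β / α) * c₁ * Real.exp (z + (β / α) * u))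
            / (m₁ + m₂ * Real.exp u + m₃ * Real.exp (z + (β / α) * u))
    lam > 0 →
      ∃ zbar : ℝ, ∀ z ≤ zbar, h (Real.log ((a₁ - α ^ 2 / 2) / b₁)) z > 0 := by
  intro q a lam h hlam
  set μ := (a₁ - α ^ 2 / 2) / b₁
  have hμ_pos : 0 < μ := div_pos (by linarith) hb₁
  have hμ : q / a = μ := by
    simp only [q, a, μ]
    field_simp
  have hjensen := rpow_div_Gamma_mul_integral_div_le (q := q) (a := a)
    (by simp only [q]; rw [sub_pos, lt_div_iff₀ (by positivity)]; linarith)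
    (by positivity) hc₂.le hm₁ hm₂.le
  rw [hμ] at hjensen
  have hlim : Tendsto (h (Real.log μ)) atBot (𝓝 (-(a₂ + β ^ 2 / 2) + c₂ * μ / (m₁ + m₂ * μ))) := by
    have hexp : Tendsto (fun z => Real.exp (z + β / α * Real.log μ)) atBot (𝓝 0) :=
      Real.tendsto_exp_atBot.comp (tendsto_atBot_add_const_right _ _ tendsto_id)
    have hden : m₁ + m₂ * Real.exp (Real.log μ) + m₃ * 0 ≠ 0 := by positivity
    -- the right-hand side is `h (log μ) z` with `exp z` and `exp (z + β / α * log μ)` set to `0`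
    have hL : -(a₂ + β ^ 2 / 2) + c₂ * μ / (m₁ + m₂ * μ) =
        -(a₂ + β ^ 2 / 2 + β / α * (a₁ - α ^ 2 / 2)) - b₂ * 0 * Real.exp (β / α * Real.log μ)
          + β / α * b₁ * Real.exp (Real.log μ)
          + (c₂ * Real.exp (Real.log μ) + β / α * c₁ * 0)
            / (m₁ + m₂ * Real.exp (Real.log μ) + m₃ * 0) := by
      simp only [Real.exp_log hμ_pos, μ]
      field_simp
      ring
    rw [hL]
    exact ((tendsto_const_nhds.sub ((tendsto_const_nhds.mul Real.tendsto_exp_atBot).mul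
      tendsto_const_nhds)).add tendsto_const_nhds).add
      ((tendsto_const_nhds.add (tendsto_const_nhds.mul hexp)).div
        (tendsto_const_nhds.add (tendsto_const_nhds.mul hexp)) hden)
  have hlim_pos : 0 < -(a₂ + β ^ 2 / 2) + c₂ * μ / (m₁ + m₂ * μ) := by
    simp only [gt_iff_lt, lam] at hlam
    linarith
  exact eventually_atBot.1 (hlim.eventually (lt_mem_nhds hlim_pos))

/-- first assertion of Lemma 3.1: if the threshold `λ` is positive, then
with `ū = ln((a₁ − α²/2)/b₁)` there exists `z̄` such that the drift `h(ū, z)` of the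
second component of the associated control system is positive for all `z ≤ z̄`. -/
theorem stmt5 (a₁ a₂ b₁ b₂ c₁ c₂ m₁ m₂ m₃ α β : ℝ)
    (ha₁ : 0 < a₁) (ha₂ : 0 < a₂) (hb₁ : 0 < b₁) (hb₂ : 0 < b₂)
    (hc₁ : 0 < c₁) (hc₂ : 0 < c₂) (hm₁ : 0 < m₁) (hm₂ : 0 < m₂) (hm₃ : 0 ≤ m₃)
    (hα : 0 < α) (hβ : β ≠ 0) (ha : a₁ > α ^ 2 / 2) :
    let q : ℝ := 2 * a₁ / α ^ 2 - 1
    let a : ℝ := 2 * b₁ / α ^ 2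
    let lam : ℝ := -a₂ - β ^ 2 / 2 + (a ^ q / Real.Gamma q) *
        ∫ x in Set.Ioi (0 : ℝ), c₂ * x ^ q * Real.exp (-a * x) / (m₁ + m₂ * x)
    let h : ℝ → ℝ → ℝ := fun u z =>
      -(a₂ + β ^ 2 / 2 + (β / α) * (a₁ - α ^ 2 / 2))
        - b₂ * Real.exp z * Real.exp ((β / α) * u)
        + (β / α) * b₁ * Real.exp u
        + (c₂ * Real.exp u + (β / α) * c₁ * Real.exp (z + (β / α) * u))
            / (m₁ + m₂ * Real.exp u + m₃ * Real.exp (z + (β / α) * u))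
    lam > 0 →
      ∃ zbar : ℝ, ∀ z ≤ zbar, h (Real.log ((a₁ - α ^ 2 / 2) / b₁)) z > 0 :=
  stmt5_general a₁ a₂ b₁ b₂ c₁ c₂ m₁ m₂ m₃ α β hb₁ hc₂ hm₁ hm₂ hm₃ hα ha
end

section
/- Let a₁, a₂, b₁, b₂, c₁, c₂, m₁, m₂ be positive reals, m₃ ≥ 0, α > 0 and β a nonzero real. Define g(u,z) := a₁ − α²/2 − b₁·e^u − c₁·e^z·e^{(β/α)u}/(m₁ + m₂·e^u + m₃·e^z·e^{(β/α)u}) and h(u,z) := −(a₂ + β²/2 + (β/α)(a₁ − α²/2)) − b₂·e^z·e^{(β/α)u} + (β/α)·b₁·e^u + (c₂·e^u + (β/α)·c₁·e^{z + (β/α)u})/(m₁ + m₂·e^u + m₃·e^{z + (β/α)u}). Then for any u₀, u₁, z₀ ∈ ℝ and any ε > 0 there exist a constant ρ₂ ∈ ℝ, a time T > 0, and differentiable functions u, z : [0,T] → ℝ with u(0) = u₀, z(0) = z₀, satisfying u′(t) = α·ρ₂ + g(u(t), z(t)) and z′(t) = h(u(t), z(t)) for all t ∈ [0,T], such that u(T)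 = u₁ and |z(T) − z₀| < ε. -/
/-!
On a closed ball around `(u₀, z₀)` the vector field `G = (g, h)` is bounded by some `M` and
`K`-Lipschitz. Take `T` with `M T` small and controls `c = α ρ₂ ∈ [-P, P]` with
`P T = |u₁ - u₀| + 1/2`, so that every such trajectory stays in the ball up to time `T`. Then
`u(T)` is within `M T` of `u₀ + c T`, so the controls `±P` overshoot `u₁` on either side, while `z`
moves by at most `M T < ε`. By Grönwall's inequality `u(T)` depends Lipschitz-continuously on `c`,
and the intermediate value theorem yields the control that hits `u₁` exactly.
-/

open Set Metric
open scoped NNReal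

theorem gronwallBound_δ0 (K ε x : ℝ) : gronwallBound 0 K ε x = ε * gronwallBound 0 K 1 x := by
  rcases eq_or_ne K 0 with rfl | hK
  · simp [gronwallBound_K0]
  · simp [gronwallBound_of_K_ne_0 hK]; ring

section Trajectories

variable {E : Type*} [NormedAddCommGroup E] [NormedSpace ℝ E]

theorem mem_closedBall_of_norm_deriv_lt {f f' : ℝ → E} {a b R L : ℝ}
    (hf : ContinuousOn f (Icc a b)) (hf' : ∀ t ∈ Ico a b, HasDerivWithinAt f (f' t) (Ici t) t)
    (hL : 0 ≤ L) (hLR : L * (b - a) ≤ R)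
    (bound : ∀ t ∈ Ico a b, f t ∈ closedBall (f a) R → ‖f' t‖ < L) :
    ∀ t ∈ Icc a b, f t ∈ closedBall (f a) R := by
  have hBR : ∀ t ∈ Icc a b, L * (t - a) ≤ R := fun t ht =>
    (mul_le_mul_of_nonneg_left (by linarith [ht.2]) hL).trans hLR
  have hB' : ∀ t ∈ Ico a b, HasDerivWithinAt (fun t => L * (t - a)) L (Ici t) t := fun t _ => by
    simpa using (((hasDerivAt_id t).sub_const a).const_mul L).hasDerivWithinAt
  have key := image_norm_le_of_norm_deriv_right_lt_deriv_boundary' (f := fun t => f t - f a)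
    (hf.sub continuousOn_const) (fun t ht => (hf' t ht).sub_const (f a)) (by simp)
    (by fun_prop) hB' fun t ht heq => bound t ht <| by
      rw [mem_closedBall_iff_norm, heq]; exact hBR t (Ico_subset_Icc_self ht)
  exact fun t ht => mem_closedBall_iff_norm.2 ((key ht).trans (hBR t ht))

theorem norm_sub_sub_smul_le_of_hasDerivAt_const_add {G : E → E} {s : Set E} {w : E}
    {x : ℝ → E} {M T : ℝ} (hT : 0 ≤ T) (hx : ∀ t ∈ Icc 0 T, HasDerivAt x (w + G (x t)) t)
    (hs : ∀ t ∈ Icc 0 T, x t ∈ s) (hG : ∀ p ∈ s, ‖G p‖ ≤ M) :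
    ‖x T - x 0 - T • w‖ ≤ M * T := by
  have hderiv : ∀ t ∈ Icc 0 T,
      HasDerivWithinAt (fun t => x t - t • w) (G (x t)) (Icc 0 T) t := fun t ht => by
    simpa using ((hx t ht).fun_sub ((hasDerivAt_id' t).smul_const w)).hasDerivWithinAt
  simpa [sub_right_comm] using norm_image_sub_le_of_norm_deriv_le_segment' hderiv
    (fun t ht => hG _ (hs t (Ico_subset_Icc_self ht))) T ⟨hT, le_rfl⟩

theorem dist_le_gronwallBound_of_hasDerivAt_const_add {G : E → E} {s : Set E} {K : ℝ≥0}
    {w₁ w₂ : E} {x₁ x₂ : ℝ → E} {T : ℝ} (hT : 0 ≤ T) (hG : LipschitzOnWith K G s)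
    (h₀ : x₁ 0 = x₂ 0) (hx₁ : ∀ t ∈ Icc 0 T, HasDerivAt x₁ (w₁ + G (x₁ t)) t)
    (hx₂ : ∀ t ∈ Icc 0 T, HasDerivAt x₂ (w₂ + G (x₂ t)) t)
    (hs₁ : ∀ t ∈ Icc 0 T, x₁ t ∈ s) (hs₂ : ∀ t ∈ Icc 0 T, x₂ t ∈ s) :
    dist (x₁ T) (x₂ T) ≤ dist w₁ w₂ * gronwallBound 0 K 1 T := by
  have hv : LipschitzOnWith K (fun p => w₁ + G p) s := fun p hp q hq => by
    simpa [edist_add_left] using hG hp hq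
  have := dist_le_of_approx_trajectories_ODE_of_mem (v := fun _ p => w₁ + G p) (s := fun _ => s)
    (εf := 0) (εg := dist w₂ w₁) (δ := 0) (fun _ _ => hv)
    (fun t ht => (hx₁ t ht).continuousAt.continuousWithinAt)
    (fun t ht => (hx₁ t (Ico_subset_Icc_self ht)).hasDerivWithinAt) (fun t _ => by simp)
    (fun t ht => hs₁ t (Ico_subset_Icc_self ht))
    (fun t ht => (hx₂ t ht).continuousAt.continuousWithinAt)
    (fun t ht => (hx₂ t (Ico_subset_Icc_self ht)).hasDerivWithinAt)
    (fun t _ => by simp [dist_add_right])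
    (fun t ht => hs₂ t (Ico_subset_Icc_self ht)) (by simp [h₀]) T ⟨hT, le_rfl⟩
  rwa [zero_add, sub_zero, dist_comm w₂, gronwallBound_δ0] at this

variable [CompleteSpace E]

theorem exists_hasDerivAt_forall_mem_closedBall {v : E → E} {x₀ : E} {K : ℝ≥0} {R L S : ℝ}
    (hv : LipschitzOnWith K v (closedBall x₀ R)) (hvL : ∀ p ∈ closedBall x₀ R, ‖v p‖ < L)
    (hR : 0 ≤ R) (hS : 0 ≤ S) (hLS : L * S ≤ R) :
    ∃ x : ℝ → E, x 0 = x₀ ∧ (∀ t ∈ Ioo (-S) S, HasDerivAt x (v (x t)) t) ∧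
      ∀ t ∈ Icc 0 S, x t ∈ closedBall x₀ R := by
  have hL : 0 ≤ L := (norm_nonneg _).trans (hvL x₀ (mem_closedBall_self hR)).le
  lift R to ℝ≥0 using hR
  lift L to ℝ≥0 using hL
  have hpl : IsPicardLindelof (fun _ => v) (tmin := -S) (tmax := S)
      ⟨0, by simp [hS]⟩ x₀ R 0 L K :=
    .of_time_independent (fun p hp => (hvL p hp).le) hv (by simpa [max_eq_left, hS] using hLS)
  obtain ⟨x, hx₀, hx⟩ := hpl.exists_eq_forall_mem_Icc_hasDerivWithinAt₀
  have hderiv : ∀ t ∈ Ioo (-S) S, HasDerivAt x (v (x t)) t := fun t ht =>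
    (hx t (Ioo_subset_Icc_self ht)).hasDerivAt (Icc_mem_nhds ht.1 ht.2)
  refine ⟨x, hx₀, hderiv, ?_⟩
  rw [← hx₀]
  refine mem_closedBall_of_norm_deriv_lt
    (fun t ht => (hx t ⟨by linarith [ht.1], ht.2⟩).continuousWithinAt.mono
      (Icc_subset_Icc (by linarith) le_rfl))
    (fun t ht => (hderiv t ⟨by linarith [ht.1, ht.2], ht.2⟩).hasDerivWithinAt) L.2
    (by simpa using hLS) fun t _ ht => hvL _ (hx₀ ▸ ht)

end Trajectories

section Steering

variable {E : Type*} [NormedAddCommGroup E] [NormedSpace ℝ E]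

theorem continuousOn_eval_of_hasDerivAt_prodMk_add {G : ℝ × E → ℝ × E} {s : Set (ℝ × E)}
    {K : ℝ≥0} (hG : LipschitzOnWith K G s) {C : Set ℝ} {x₀ : ℝ × E} {T : ℝ} (hT : 0 ≤ T)
    {X : ℝ → ℝ → ℝ × E} (hX₀ : ∀ c ∈ C, X c 0 = x₀)
    (hX : ∀ c ∈ C, ∀ t ∈ Icc 0 T, HasDerivAt (X c) ((c, 0) + G (X c t)) t)
    (hXs : ∀ c ∈ C, ∀ t ∈ Icc 0 T, X c t ∈ s) :
    ContinuousOn (fun c => X c T) C := by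
  refine (LipschitzOnWith.of_dist_le_mul (K := (gronwallBound 0 K 1 T).toNNReal)
    fun c₁ h₁ c₂ h₂ => ?_).continuousOn
  have := dist_le_gronwallBound_of_hasDerivAt_const_add hT hG ((hX₀ c₁ h₁).trans (hX₀ c₂ h₂).symm)
    (hX c₁ h₁) (hX c₂ h₂) (hXs c₁ h₁) (hXs c₂ h₂)
  rw [dist_prod_same_right, mul_comm] at this
  exact this.trans (mul_le_mul_of_nonneg_right (Real.le_coe_toNNReal _) dist_nonneg)

theorem exists_hasDerivAt_prodMk_add_forall_mem_closedBall [CompleteSpace E]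
    {G : ℝ × E → ℝ × E} {x₀ : ℝ × E} {K : ℝ≥0} {R M P T c : ℝ}
    (hG : LipschitzOnWith K G (closedBall x₀ R)) (hGM : ∀ p ∈ closedBall x₀ R, ‖G p‖ ≤ M)
    (hc : |c| ≤ P) (hT : 0 < T) (hR : 0 ≤ R) (hPMT : (P + M + 1) * (2 * T) ≤ R) :
    ∃ x : ℝ → ℝ × E, x 0 = x₀ ∧ (∀ t ∈ Icc 0 T, HasDerivAt x ((c, 0) + G (x t)) t) ∧
      ∀ t ∈ Icc 0 T, x t ∈ closedBall x₀ R := by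
  have hv : LipschitzOnWith K (fun p => (c, 0) + G p) (closedBall x₀ R) := fun p hp q hq => by
    simpa [edist_add_left] using hG hp hq
  have hvL : ∀ p ∈ closedBall x₀ R, ‖(c, (0 : E)) + G p‖ < P + M + 1 := fun p hp =>
    calc ‖(c, (0 : E)) + G p‖ ≤ |c| + M := by
          simpa using (norm_add_le _ _).trans (add_le_add_right (hGM p hp) ‖(c, (0 : E))‖)
      _ < P + M + 1 := by linarith
  obtain ⟨x, hx₀, hx, hxR⟩ :=
    exists_hasDerivAt_forall_mem_closedBall hv hvL hR (by positivity) hPMT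
  exact ⟨x, hx₀, fun t ht => hx t ⟨by linarith [ht.1], by linarith [ht.2]⟩,
    fun t ht => hxR t ⟨ht.1, by linarith [ht.2]⟩⟩

theorem exists_const_control_fst_eq_of_lipschitzOnWith [CompleteSpace E] {G : ℝ × E → ℝ × E}
    {x₀ : ℝ × E} {u₁ ε R M : ℝ} {K : ℝ≥0} (hG : LipschitzOnWith K G (closedBall x₀ R))
    (hGM : ∀ p ∈ closedBall x₀ R, ‖G p‖ ≤ M) (hR : 2 * |u₁ - x₀.1| + 2 ≤ R) (hε : 0 < ε) :
    ∃ c T : ℝ, 0 < T ∧ ∃ x : ℝ → ℝ × E, x 0 = x₀ ∧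
      (∀ t ∈ Icc 0 T, HasDerivAt x ((c, 0) + G (x t)) t) ∧
      (x T).1 = u₁ ∧ ‖(x T).2 - x₀.2‖ < ε := by
  set d := |u₁ - x₀.1|
  obtain ⟨T, hT, hMT⟩ := exists_pos_mul_lt (lt_min one_half_pos hε) (M + 1)
  obtain ⟨hMT₁, hMTε⟩ := lt_min_iff.1 hMT
  set P := (d + 1 / 2) / T
  have hPT : T * P = d + 1 / 2 := mul_div_cancel₀ _ hT.ne'
  have hsol (c : ℝ) (hc : c ∈ Icc (-P) P) :=
    exists_hasDerivAt_prodMk_add_forall_mem_closedBall hG hGM (abs_le.2 hc) hT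
      (by linarith [abs_nonneg (u₁ - x₀.1)]) (by nlinarith)
  choose! X hX₀ hX hXR using hsol
  have hdisp : ∀ c ∈ Icc (-P) P, ‖X c T - x₀ - T • ((c, 0) : ℝ × E)‖ ≤ M * T := fun c hc => by
    simpa [hX₀ c hc] using norm_sub_sub_smul_le_of_hasDerivAt_const_add hT.le (hX c hc)
      (hXR c hc) hGM
  have hfst : ∀ c ∈ Icc (-P) P, |(X c T).1 - x₀.1 - T * c| < 1 / 2 := fun c hc => by
    have := (norm_fst_le _).trans (hdisp c hc)
    simp only [Prod.fst_sub, Prod.smul_fst, smul_eq_mul, Real.norm_eq_abs] at this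
    linarith
  have hP : 0 ≤ P := by positivity
  have hlow := abs_lt.1 (hfst (-P) ⟨le_rfl, by linarith⟩)
  have hhigh := abs_lt.1 (hfst P ⟨by linarith, le_rfl⟩)
  obtain ⟨c, hc, hcu⟩ := intermediate_value_Icc (by linarith) (continuous_fst.comp_continuousOn
    (continuousOn_eval_of_hasDerivAt_prodMk_add hG hT.le hX₀ hX hXR))
    (show u₁ ∈ Icc (X (-P) T).1 (X P T).1 from
      ⟨by linarith [neg_abs_le (u₁ - x₀.1)], by linarith [le_abs_self (u₁ - x₀.1)]⟩)
  refine ⟨c, T, hT, X c, hX₀ c hc, hX c hc, hcu, ?_⟩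
  calc ‖(X c T).2 - x₀.2‖ ≤ ‖X c T - x₀ - T • ((c, 0) : ℝ × E)‖ := by
        simpa using norm_snd_le (X c T - x₀ - T • ((c, 0) : ℝ × E))
    _ ≤ M * T := hdisp c hc
    _ < ε := by linarith

theorem exists_const_control_fst_eq [ProperSpace E] {G : ℝ × E → ℝ × E} (hG : LocallyLipschitz G)
    (x₀ : ℝ × E) (u₁ : ℝ) {ε : ℝ} (hε : 0 < ε) :
    ∃ c T : ℝ, 0 < T ∧ ∃ x : ℝ → ℝ × E, x 0 = x₀ ∧
      (∀ t ∈ Icc 0 T, HasDerivAt x ((c, 0) + G (x t)) t) ∧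
      (x T).1 = u₁ ∧ ‖(x T).2 - x₀.2‖ < ε := by
  have hB := isCompact_closedBall x₀ (2 * |u₁ - x₀.1| + 2)
  obtain ⟨K, hK⟩ := hG.locallyLipschitzOn.exists_lipschitzOnWith_of_compact hB
  obtain ⟨M, hM⟩ := hB.exists_bound_of_continuousOn hG.continuous.continuousOn
  exact exists_const_control_fst_eq_of_lipschitzOnWith hK hM le_rfl hε

end Steering

theorem stmt6_general (a₁ a₂ b₁ b₂ c₁ c₂ m₁ m₂ m₃ α β : ℝ)
    (hm₁ : 0 < m₁) (hm₂ : 0 < m₂) (hm₃ : 0 ≤ m₃)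
    (hα : 0 < α) :
    let g : ℝ → ℝ → ℝ := fun u z =>
      a₁ - α ^ 2 / 2 - b₁ * Real.exp u
        - c₁ * Real.exp z * Real.exp ((β / α) * u)
            / (m₁ + m₂ * Real.exp u + m₃ * Real.exp z * Real.exp ((β / α) * u))
    let h : ℝ → ℝ → ℝ := fun u z =>
      -(a₂ + β ^ 2 / 2 + (β / α) * (a₁ - α ^ 2 / 2))
        - b₂ * Real.exp z * Real.exp ((β / α) * u)
        + (β / α) * b₁ * Real.exp u
        + (c₂ * Real.exp u + (β / α) * c₁ * Real.exp (z + (β / α) * u))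
            / (m₁ + m₂ * Real.exp u + m₃ * Real.exp (z + (β / α) * u))
    ∀ u₀ u₁ z₀ : ℝ, ∀ ε : ℝ, 0 < ε →
      ∃ ρ₂ : ℝ, ∃ T : ℝ, 0 < T ∧ ∃ u z : ℝ → ℝ,
        u 0 = u₀ ∧ z 0 = z₀ ∧
        (∀ t ∈ Set.Icc (0 : ℝ) T, HasDerivAt u (α * ρ₂ + g (u t) (z t)) t) ∧
        (∀ t ∈ Set.Icc (0 : ℝ) T, HasDerivAt z (h (u t) (z t)) t) ∧
        u T = u₁ ∧ |z T - z₀| < ε := by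
  intro g h u₀ u₁ z₀ ε hε
  have hG : ContDiff ℝ 1 fun p : ℝ × ℝ => (g p.1 p.2, h p.1 p.2) := by
    fun_prop (disch := intro; positivity)
  obtain ⟨c, T, hT, x, hx₀, hx, hxT, hxε⟩ :=
    exists_const_control_fst_eq hG.locallyLipschitz (u₀, z₀) u₁ hε
  refine ⟨c / α, T, hT, fun t => (x t).1, fun t => (x t).2, by simp [hx₀], by simp [hx₀],
    fun t ht => ?_, fun t ht => ?_, hxT, hxε⟩
  · simpa [Function.comp_def, mul_div_cancel₀ c hα.ne'] using
      hasFDerivAt_fst.comp_hasDerivAt t (hx t ht)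
  · simpa [Function.comp_def] using hasFDerivAt_snd.comp_hasDerivAt t (hx t ht)

/-- Claim 1 of Section 3: for the control system in coordinates `(u, z)`,
using a constant control `ρ₂` one can steer the `u`-component from `u₀` to any `u₁`
in finite time while moving the `z`-component by less than `ε`. -/
theorem stmt6 (a₁ a₂ b₁ b₂ c₁ c₂ m₁ m₂ m₃ α β : ℝ)
    (ha₁ : 0 < a₁) (ha₂ : 0 < a₂) (hb₁ : 0 < b₁) (hb₂ : 0 < b₂)
    (hc₁ : 0 < c₁) (hc₂ : 0 < c₂) (hm₁ : 0 < m₁) (hm₂ : 0 < m₂) (hm₃ : 0 ≤ m₃)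
    (hα : 0 < α) (hβ : β ≠ 0) :
    let g : ℝ → ℝ → ℝ := fun u z =>
      a₁ - α ^ 2 / 2 - b₁ * Real.exp u
        - c₁ * Real.exp z * Real.exp ((β / α) * u)
            / (m₁ + m₂ * Real.exp u + m₃ * Real.exp z * Real.exp ((β / α) * u))
    let h : ℝ → ℝ → ℝ := fun u z =>
      -(a₂ + β ^ 2 / 2 + (β / α) * (a₁ - α ^ 2 / 2))
        - b₂ * Real.exp z * Real.exp ((β / α) * u)
        + (β / α) * b₁ * Real.exp u
        + (c₂ * Real.exp u + (β / α) * c₁ * Real.exp (z + (β / α) * u))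
            / (m₁ + m₂ * Real.exp u + m₃ * Real.exp (z + (β / α) * u))
    ∀ u₀ u₁ z₀ : ℝ, ∀ ε : ℝ, 0 < ε →
      ∃ ρ₂ : ℝ, ∃ T : ℝ, 0 < T ∧ ∃ u z : ℝ → ℝ,
        u 0 = u₀ ∧ z 0 = z₀ ∧
        (∀ t ∈ Set.Icc (0 : ℝ) T, HasDerivAt u (α * ρ₂ + g (u t) (z t)) t) ∧
        (∀ t ∈ Set.Icc (0 : ℝ) T, HasDerivAt z (h (u t) (z t)) t) ∧
        u T = u₁ ∧ |z T - z₀| < ε :=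
  stmt6_general a₁ a₂ b₁ b₂ c₁ c₂ m₁ m₂ m₃ α β hm₁ hm₂ hm₃ hα
end

section
/- Let a₁, a₂, b₁, b₂, c₁, c₂, m₁, m₂ be positive reals, m₃ ≥ 0, α > 0 and β < 0. Define h(u,z) := −(a₂ + β²/2 + (β/α)(a₁ − α²/2)) − b₂·e^z·e^{(β/α)u} + (β/α)·b₁·e^u + (c₂·e^u + (β/α)·c₁·e^{z + (β/α)u})/(m₁ + m₂·e^u + m₃·e^{z + (β/α)u}). Then for any reals z₁ ≤ z₀ there exist U ∈ ℝ and ρ₃ > 0 such that h(u, z) ≤ −ρ₃ for all u ≥ U and all z ∈ [z₁, z₀]. -/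
/-- key estimate in Claim 2 of Section 3, case `β < 0`: for `β < 0`,
the drift `h(u, z)` is uniformly bounded above by a negative constant for all
sufficiently large `u` and `z` in a compact interval `[z₁, z₀]`. -/
theorem stmt8 (a₁ a₂ b₁ b₂ c₁ c₂ m₁ m₂ m₃ α β : ℝ)
    (ha₁ : 0 < a₁) (ha₂ : 0 < a₂) (hb₁ : 0 < b₁) (hb₂ : 0 < b₂)
    (hc₁ : 0 < c₁) (hc₂ : 0 < c₂) (hm₁ : 0 < m₁) (hm₂ : 0 < m₂) (hm₃ : 0 ≤ m₃)
    (hα : 0 < α) (hβ : β < 0) :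
    let h : ℝ → ℝ → ℝ := fun u z =>
      -(a₂ + β ^ 2 / 2 + (β / α) * (a₁ - α ^ 2 / 2))
        - b₂ * Real.exp z * Real.exp ((β / α) * u)
        + (β / α) * b₁ * Real.exp u
        + (c₂ * Real.exp u + (β / α) * c₁ * Real.exp (z + (β / α) * u))
            / (m₁ + m₂ * Real.exp u + m₃ * Real.exp (z + (β / α) * u))
    ∀ z₁ z₀ : ℝ, z₁ ≤ z₀ →
      ∃ U : ℝ, ∃ ρ₃ : ℝ, 0 < ρ₃ ∧
        ∀ u ≥ U, ∀ z ∈ Set.Icc z₁ z₀, h u z ≤ -ρ₃ := by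
  intro h z₁ z₀ _
  have hk0 : β / α < 0 := div_neg_of_neg_of_pos hβ hα
  set C : ℝ := -(a₂ + β ^ 2 / 2 + (β / α) * (a₁ - α ^ 2 / 2)) + c₂ / m₂ with hC
  have hkb : 0 < b₁ * (-(β / α)) := mul_pos hb₁ (neg_pos.mpr hk0)
  refine ⟨Real.log (max 1 ((C + 1) / (b₁ * (-(β / α))))), 1, one_pos, ?_⟩
  intro u hu z hz
  have hmax : (0:ℝ) < max 1 ((C + 1) / (b₁ * (-(β / α)))) :=
    lt_of_lt_of_le one_pos (le_max_left _ _)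
  have heu : (C + 1) / (b₁ * (-(β / α))) ≤ Real.exp u := by
    calc (C + 1) / (b₁ * (-(β / α))) ≤ max 1 ((C + 1) / (b₁ * (-(β / α)))) :=
          le_max_right _ _
      _ = Real.exp (Real.log (max 1 ((C + 1) / (b₁ * (-(β / α)))))) :=
          (Real.exp_log hmax).symm
      _ ≤ Real.exp u := Real.exp_le_exp.mpr hu
  have h1 : (β / α) * b₁ * Real.exp u ≤ -(C + 1) := by
    have := (div_le_iff₀ hkb).mp heu
    nlinarith
  have h2 : 0 ≤ b₂ * Real.exp z * Real.exp ((β / α) * u) := by positivity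
  have hden : 0 < m₁ + m₂ * Real.exp u + m₃ * Real.exp (z + (β / α) * u) := by positivity
  have hfrac : (c₂ * Real.exp u + (β / α) * c₁ * Real.exp (z + (β / α) * u))
      / (m₁ + m₂ * Real.exp u + m₃ * Real.exp (z + (β / α) * u)) ≤ c₂ / m₂ := by
    rw [div_le_div_iff₀ hden hm₂]
    have e1 := Real.exp_pos u
    have e2 := Real.exp_pos (z + (β / α) * u)
    nlinarith [mul_pos hc₂ hm₁, mul_nonneg (mul_nonneg hc₂.le hm₃) e2.le,
      mul_pos (mul_pos (neg_pos.mpr hk0) hc₁) e2, mul_pos hc₂ (mul_pos hm₂ e1)]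
  show _ ≤ _
  simp only [h]
  have : C - c₂ / m₂ = -(a₂ + β ^ 2 / 2 + (β / α) * (a₁ - α ^ 2 / 2)) := by
    rw [hC]; ring
  linarith [h1, h2, hfrac]
end

section
/- Let a₁, a₂, b₁, b₂, c₁, c₂, m₁, m₂ be positive reals, m₃ ≥ 0, and let 0 < β < α. Define h(u,z) := −(a₂ + β²/2 + (β/α)(a₁ − α²/2)) − b₂·e^z·e^{(β/α)u} + (β/α)·b₁·e^u + (c₂·e^u + (β/α)·c₁·e^{z + (β/α)u})/(m₁ + m₂·e^u + m₃·e^{z + (β/α)u}). Then for any reals z₀ < z₁ there exists U ∈ ℝ such that for every u₀ ≥ U one has inf{h(u₀, z) : z ∈ [z₀, z₁]} > 0, and consequently there exist T > 0 and a differentiable function z : [0,T] → ℝ with z(0) = z₀, z(T) = z₁, and z′(t) = h(u₀, z(t)) for all t ∈ [0,T]. -/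
open Set intervalIntegral Filter

lemma keyPos (a₁ a₂ b₁ b₂ c₁ c₂ m₁ m₂ m₃ α β : ℝ)
    (hb₁ : 0 < b₁) (hb₂ : 0 < b₂) (hc₁ : 0 < c₁) (hc₂ : 0 < c₂)
    (hm₁ : 0 < m₁) (hm₂ : 0 < m₂) (hm₃ : 0 ≤ m₃)
    (hβ : 0 < β) (hβα : β < α) (z' : ℝ) :
    ∃ U : ℝ, ∀ u₀ ≥ U, ∀ z ≤ z',
      1 ≤ -(a₂ + β ^ 2 / 2 + (β / α) * (a₁ - α ^ 2 / 2))
        - b₂ * Real.exp z * Real.exp ((β / α) * u₀)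
        + (β / α) * b₁ * Real.exp u₀
        + (c₂ * Real.exp u₀ + (β / α) * c₁ * Real.exp (z + (β / α) * u₀))
            / (m₁ + m₂ * Real.exp u₀ + m₃ * Real.exp (z + (β / α) * u₀)) := by
  have hα : (0:ℝ) < α := hβ.trans hβα
  set r := β / α with hr
  have hr0 : 0 < r := div_pos hβ hα
  have hr1 : r < 1 := (div_lt_one hα).2 hβα
  set K := a₂ + β ^ 2 / 2 + r * (a₁ - α ^ 2 / 2) with hK
  set C := b₂ * Real.exp z' + |K| + 1 with hC
  have hC0 : 0 < C := by positivity
  refine ⟨max 0 ((1 - r)⁻¹ * Real.log (C / (r * b₁))), fun u₀ hu₀ z hz => ?_⟩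
  have hu0 : 0 ≤ u₀ := le_trans (le_max_left _ _) hu₀
  -- the fraction is nonnegative
  have hfrac : 0 ≤ (c₂ * Real.exp u₀ + r * c₁ * Real.exp (z + r * u₀))
      / (m₁ + m₂ * Real.exp u₀ + m₃ * Real.exp (z + r * u₀)) := by positivity
  have hez : Real.exp z ≤ Real.exp z' := Real.exp_le_exp.2 hz
  have heru : (1:ℝ) ≤ Real.exp (r * u₀) := Real.one_le_exp (by positivity)
  have hsplit : Real.exp u₀ = Real.exp (r * u₀) * Real.exp ((1 - r) * u₀) := by
    rw [← Real.exp_add]; ring_nf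
  have hbig : C / (r * b₁) ≤ Real.exp ((1 - r) * u₀) := by
    have h1 : (1 - r)⁻¹ * Real.log (C / (r * b₁)) ≤ u₀ :=
      le_trans (le_max_right _ _) hu₀
    have h2 : Real.log (C / (r * b₁)) ≤ (1 - r) * u₀ := by
      rw [inv_mul_le_iff₀ (by linarith)] at h1
      linarith [h1]
    calc C / (r * b₁) = Real.exp (Real.log (C / (r * b₁))) :=
          (Real.exp_log (by positivity)).symm
      _ ≤ Real.exp ((1 - r) * u₀) := Real.exp_le_exp.2 h2
  -- main bound
  have hbracket : C ≤ r * b₁ * Real.exp ((1 - r) * u₀) := by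
    rw [div_le_iff₀ (by positivity)] at hbig
    nlinarith
  have hmain : |K| + 1 ≤ - (b₂ * Real.exp z * Real.exp (r * u₀))
      + r * b₁ * Real.exp u₀ := by
    have hexpz : 0 < Real.exp z := Real.exp_pos z
    have h3 : |K| + 1 ≤ r * b₁ * Real.exp ((1 - r) * u₀) - b₂ * Real.exp z' := by
      rw [hC] at hbracket; linarith
    have h4 : |K| + 1 ≤
        Real.exp (r * u₀) * (r * b₁ * Real.exp ((1 - r) * u₀) - b₂ * Real.exp z') :=
      h3.trans (le_mul_of_one_le_left (by nlinarith [abs_nonneg K]) heru)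
    have h5 : r * b₁ * Real.exp u₀ =
        Real.exp (r * u₀) * (r * b₁ * Real.exp ((1 - r) * u₀)) := by
      rw [hsplit]; ring
    nlinarith [Real.exp_pos (r * u₀), mul_le_mul_of_nonneg_left hez
      (le_of_lt (Real.exp_pos (r * u₀)))]
  have hKabs : -K ≥ -|K| := neg_le_neg (le_abs_self K)
  clear_value K C
  linarith [hfrac]

lemma odeLemma (φ : ℝ → ℝ) (hφc : Continuous φ) (z₀ z₁ : ℝ) (hz : z₀ < z₁)
    (hpos : ∀ z ∈ Set.Icc (z₀ - 1) (z₁ + 1), 1 ≤ φ z) :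
    ∃ T : ℝ, 0 < T ∧ ∃ g : ℝ → ℝ, g 0 = z₀ ∧ g T = z₁ ∧
      ∀ t ∈ Set.Icc (0 : ℝ) T, HasDerivAt g (φ (g t)) t := by
  have hpq : z₀ - 1 ≤ z₁ + 1 := by linarith
  set p := z₀ - 1 with hp
  set q := z₁ + 1 with hq
  set proj : ℝ → ℝ := fun s => max p (min s q) with hproj
  have hprojmem : ∀ s, proj s ∈ Set.Icc p q :=
    fun s => ⟨le_max_left _ _, max_le hpq (min_le_right _ _)⟩
  have hprojid : ∀ s ∈ Set.Icc p q, proj s = s := by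
    intro s hs
    simp only [hproj]
    rw [min_eq_left hs.2, max_eq_right hs.1]
  have hprojc : Continuous proj :=
    continuous_const.max (continuous_id.min continuous_const)
  set φ' : ℝ → ℝ := fun s => φ (proj s) with hφ'
  have hφ'c : Continuous φ' := hφc.comp hprojc
  have hφ'pos : ∀ s, 1 ≤ φ' s := fun s => hpos _ (hprojmem s)
  obtain ⟨x₀, -, hx₀⟩ := isCompact_Icc.exists_isMaxOn (f := φ)
    ⟨p, le_refl p, hpq⟩ hφc.continuousOn
  set M := φ x₀ with hMdef
  have hM : ∀ s, φ' s ≤ M := fun s => hx₀ (hprojmem s)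
  have hM0 : (0:ℝ) < M := lt_of_lt_of_le one_pos (le_trans (hφ'pos p) (hM p))
  set ψ : ℝ → ℝ := fun s => (φ' s)⁻¹ with hψ
  have hψpos : ∀ s, 0 < ψ s := fun s => inv_pos.2 (lt_of_lt_of_le one_pos (hφ'pos s))
  have hψc : Continuous ψ := hφ'c.inv₀ (fun s => by
    have := hφ'pos s; positivity)
  have hψlb : ∀ s, M⁻¹ ≤ ψ s := fun s =>
    inv_anti₀ (lt_of_lt_of_le one_pos (hφ'pos s)) (hM s)
  set F : ℝ → ℝ := fun x => ∫ s in z₀..x, ψ s with hF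
  have hFderiv : ∀ x, HasDerivAt F (ψ x) x := by
    intro x
    apply integral_hasDerivAt_right (hψc.intervalIntegrable _ _)
      hψc.aestronglyMeasurable.stronglyMeasurableAtFilter hψc.continuousAt
  have hFmono : StrictMono F := by
    apply strictMono_of_deriv_pos
    intro x
    rw [(hFderiv x).deriv]
    exact hψpos x
  have hFcont : Continuous F :=
    continuous_iff_continuousAt.2 fun x => (hFderiv x).continuousAt
  have hlow : ∀ x ≥ z₀, M⁻¹ * x - M⁻¹ * z₀ ≤ F x := by
    intro x hx
    have h1 : ∫ s in z₀..x, M⁻¹ ≤ ∫ s in z₀..x, ψ s := by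
      apply intervalIntegral.integral_mono_on hx
        (intervalIntegrable_const) (hψc.intervalIntegrable _ _)
      intro s _; exact hψlb s
    rw [intervalIntegral.integral_const, smul_eq_mul] at h1
    have : F x = ∫ s in z₀..x, ψ s := rfl
    rw [this]; nlinarith
  have hhigh : ∀ x ≤ z₀, F x ≤ M⁻¹ * x - M⁻¹ * z₀ := by
    intro x hx
    have h1 : ∫ s in x..z₀, M⁻¹ ≤ ∫ s in x..z₀, ψ s := by
      apply intervalIntegral.integral_mono_on hx
        (intervalIntegrable_const) (hψc.intervalIntegrable _ _)
      intro s _; exact hψlb s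
    rw [intervalIntegral.integral_const, smul_eq_mul] at h1
    have h2 : F x = -∫ s in x..z₀, ψ s := by
      rw [show F x = ∫ s in z₀..x, ψ s from rfl, intervalIntegral.integral_symm]
    rw [h2]; nlinarith
  have hlin_top : Tendsto (fun x : ℝ => M⁻¹ * x - M⁻¹ * z₀) atTop atTop := by
    apply Filter.tendsto_atTop_add_const_right
    exact (tendsto_const_mul_atTop_of_pos (by positivity)).2 tendsto_id
  have hlin_bot : Tendsto (fun x : ℝ => M⁻¹ * x - M⁻¹ * z₀) atBot atBot := by
    apply Filter.tendsto_atBot_add_const_right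
    exact (tendsto_const_mul_atBot_of_pos (by positivity)).2 tendsto_id
  have htop : Tendsto F atTop atTop := by
    apply tendsto_atTop_mono' _ _ hlin_top
    filter_upwards [eventually_ge_atTop z₀] with x hx using hlow x hx
  have hbot : Tendsto F atBot atBot := by
    apply tendsto_atBot_mono' _ _ hlin_bot
    filter_upwards [eventually_le_atBot z₀] with x hx using hhigh x hx
  have hFsurj : Function.Surjective F := hFcont.surjective htop hbot
  set e := StrictMono.orderIsoOfSurjective F hFmono hFsurj with he
  set g : ℝ → ℝ := fun t => e.symm t with hg
  have hge : ∀ x, F (g x) = x := fun x => e.apply_symm_apply x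
  have hgc : Continuous g := e.symm.continuous
  have hFz₀ : F z₀ = 0 := by
    rw [show F z₀ = ∫ s in z₀..z₀, ψ s from rfl, intervalIntegral.integral_same]
  have hg0 : g 0 = z₀ := hFmono.injective (by rw [hge, hFz₀])
  set T := F z₁ with hT
  have hT0 : 0 < T := by
    rw [hT, ← hFz₀]; exact hFmono hz
  have hgT : g T = z₁ := hFmono.injective (by rw [hge])
  refine ⟨T, hT0, g, hg0, hgT, ?_⟩
  intro t ht
  have hgmono : Monotone g := e.symm.monotone
  have hgt1 : z₀ ≤ g t := by rw [← hg0]; exact hgmono ht.1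
  have hgt2 : g t ≤ z₁ := by rw [← hgT]; exact hgmono ht.2
  have hmem : g t ∈ Set.Icc p q := ⟨by rw [hp]; linarith, by rw [hq]; linarith⟩
  have hne : ψ (g t) ≠ 0 := ne_of_gt (hψpos _)
  have hd : HasDerivAt g (ψ (g t))⁻¹ t :=
    HasDerivAt.of_local_left_inverse (hgc.continuousAt) (hFderiv (g t)) hne
      (Filter.Eventually.of_forall hge)
  have heq : (ψ (g t))⁻¹ = φ (g t) := by
    rw [hψ]
    simp only [inv_inv, hφ']
    rw [hprojid _ hmem]
  rwa [heq] at hd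

/-- Claim 3 of Section 3: when `0 < β < α`, for any `z₀ < z₁` the drift
`h(u₀,·)` is uniformly positive on `[z₀, z₁]` for all sufficiently large `u₀`, and
consequently the autonomous flow of the second coordinate carries `z₀` up to `z₁`
in finite time. -/
theorem stmt10 (a₁ a₂ b₁ b₂ c₁ c₂ m₁ m₂ m₃ α β : ℝ)
    (ha₁ : 0 < a₁) (ha₂ : 0 < a₂) (hb₁ : 0 < b₁) (hb₂ : 0 < b₂)
    (hc₁ : 0 < c₁) (hc₂ : 0 < c₂) (hm₁ : 0 < m₁) (hm₂ : 0 < m₂) (hm₃ : 0 ≤ m₃)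
    (hβ : 0 < β) (hβα : β < α) :
    let h : ℝ → ℝ → ℝ := fun u z =>
      -(a₂ + β ^ 2 / 2 + (β / α) * (a₁ - α ^ 2 / 2))
        - b₂ * Real.exp z * Real.exp ((β / α) * u)
        + (β / α) * b₁ * Real.exp u
        + (c₂ * Real.exp u + (β / α) * c₁ * Real.exp (z + (β / α) * u))
            / (m₁ + m₂ * Real.exp u + m₃ * Real.exp (z + (β / α) * u))
    ∀ z₀ z₁ : ℝ, z₀ < z₁ →
      ∃ U : ℝ, ∀ u₀ ≥ U,
        (∃ ρ : ℝ, 0 < ρ ∧ ∀ z ∈ Set.Icc z₀ z₁, ρ ≤ h u₀ z) ∧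
        ∃ T : ℝ, 0 < T ∧ ∃ z : ℝ → ℝ,
          z 0 = z₀ ∧ z T = z₁ ∧
          ∀ t ∈ Set.Icc (0 : ℝ) T, HasDerivAt z (h u₀ (z t)) t := by
  intro h z₀ z₁ hz
  obtain ⟨U, hU⟩ := keyPos a₁ a₂ b₁ b₂ c₁ c₂ m₁ m₂ m₃ α β hb₁ hb₂ hc₁ hc₂
    hm₁ hm₂ hm₃ hβ hβα (z₁ + 1)
  refine ⟨U, fun u₀ hu₀ => ⟨⟨1, one_pos, fun z hzm => hU u₀ hu₀ z (by linarith [hzm.2])⟩, ?_⟩⟩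
  have hcont : Continuous (fun z => h u₀ z) := by
    show Continuous (fun z : ℝ =>
      -(a₂ + β ^ 2 / 2 + (β / α) * (a₁ - α ^ 2 / 2))
        - b₂ * Real.exp z * Real.exp ((β / α) * u₀)
        + (β / α) * b₁ * Real.exp u₀
        + (c₂ * Real.exp u₀ + (β / α) * c₁ * Real.exp (z + (β / α) * u₀))
            / (m₁ + m₂ * Real.exp u₀ + m₃ * Real.exp (z + (β / α) * u₀)))
    apply Continuous.add
    · fun_prop
    · apply Continuous.div
      · fun_prop
      · fun_prop
      · intro z
        have := Real.exp_pos u₀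
        have := Real.exp_pos (z + (β / α) * u₀)
        positivity
  have hpos : ∀ z ∈ Set.Icc (z₀ - 1) (z₁ + 1), 1 ≤ h u₀ z := by
    intro z hzm
    exact hU u₀ hu₀ z hzm.2
  exact odeLemma (fun z => h u₀ z) hcont z₀ z₁ hz hpos
end

section
/- Define, for parameters p = (a₁, a₂, b₁, c₂, m₁, m₂, α, β) in the domain D := { a₁, a₂, b₁, c₂, m₁, m₂ > 0, α ≠ 0, β ∈ ℝ, a₁ > α²/2 }, the quantities q(p) := 2a₁/α² − 1, a(p) := 2b₁/α², and λ(p) := −a₂ − β²/2 + (a(p)^{q(p)}/Γ(q(p)))·∫₀^∞ c₂·x^{q(p)}·e^{−a(p)·x}/(m₁ + m₂·x) dx. Then the function p ↦ λ(p) is continuous on D. -/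
/-!
The only nontrivial ingredient is the integral. Near a point of `D` the exponent `q` stays in
some `[s, u]` with `s > -1`, the rate stays above half its value and the denominator above half
of `m₁`, so the integrand is dominated by `C (x^s + x^u) e^{-a x / 2}`, which is integrable on
`(0, ∞)`; dominated convergence gives continuity. The prefactor `a^q / Γ(q)` is continuous
because `a > 0` and `Γ` is continuous and positive at `q > 0`.
-/

open Real MeasureTheory Set Filter Topology

/-- The threshold `λ(p)` of the stochastic Beddington–DeAngelis predator–prey model,
as a function of the parameter tuple `p = (a₁, a₂, b₁, c₂, m₁, m₂, α, β)`:
`λ(p) = −a₂ − β²/2 + (a^q/Γ(q))·∫₀^∞ c₂·x^q·e^(−a·x)/(m₁ + m₂·x) dx`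
with `q = 2a₁/α² − 1` and `a = 2b₁/α²`. -/
noncomputable def lamP (p : ℝ × ℝ × ℝ × ℝ × ℝ × ℝ × ℝ × ℝ) : ℝ :=
  let a₁ := p.1; let a₂ := p.2.1; let b₁ := p.2.2.1; let c₂ := p.2.2.2.1
  let m₁ := p.2.2.2.2.1; let m₂ := p.2.2.2.2.2.1
  let α := p.2.2.2.2.2.2.1; let β := p.2.2.2.2.2.2.2
  let q : ℝ := 2 * a₁ / α ^ 2 - 1
  let a : ℝ := 2 * b₁ / α ^ 2
  (-a₂ - β ^ 2 / 2) + (a ^ q / Real.Gamma q) *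
    (∫ x in Set.Ioi (0 : ℝ), c₂ * x ^ q * Real.exp (-a * x) / (m₁ + m₂ * x))

/-- The parameter domain `D`: `a₁, a₂, b₁, c₂, m₁, m₂ > 0`, `α ≠ 0`, `β ∈ ℝ`,
and `a₁ > α²/2`. -/
def paramD : Set (ℝ × ℝ × ℝ × ℝ × ℝ × ℝ × ℝ × ℝ) :=
  {p | 0 < p.1 ∧ 0 < p.2.1 ∧ 0 < p.2.2.1 ∧ 0 < p.2.2.2.1 ∧ 0 < p.2.2.2.2.1 ∧
       0 < p.2.2.2.2.2.1 ∧ p.2.2.2.2.2.2.1 ≠ 0 ∧ p.1 > p.2.2.2.2.2.2.1 ^ 2 / 2}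

lemma rpow_le_rpow_add_rpow {x s t u : ℝ} (hx : 0 < x) (hst : s ≤ t) (htu : t ≤ u) :
    x ^ t ≤ x ^ s + x ^ u := by
  rcases le_total x 1 with h | h
  · linarith [rpow_le_rpow_of_exponent_ge hx h hst, rpow_nonneg hx.le u]
  · linarith [rpow_le_rpow_of_exponent_le h htu, rpow_nonneg hx.le s]

lemma integrableOn_rpow_mul_exp_neg_mul {s b : ℝ} (hs : -1 < s) (hb : 0 < b) :
    IntegrableOn (fun x : ℝ => x ^ s * exp (-b * x)) (Ioi 0) := by
  simpa only [rpow_one] using integrableOn_rpow_mul_exp_neg_mul_rpow hs one_pos hb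

lemma norm_mul_rpow_mul_exp_div_le {c q b m n C s u b' m' x : ℝ} (hx : 0 < x) (hc : |c| ≤ C)
    (hsq : s ≤ q) (hqu : q ≤ u) (hb : b' ≤ b) (hm' : 0 < m') (hm : m' ≤ m) (hn : 0 ≤ n) :
    ‖c * x ^ q * exp (-b * x) / (m + n * x)‖ ≤ C * (x ^ s + x ^ u) * exp (-b' * x) / m' := by
  have hden : m' ≤ m + n * x := by nlinarith
  rw [norm_div, norm_mul, norm_mul, Real.norm_eq_abs, Real.norm_of_nonneg (rpow_nonneg hx.le q),
    Real.norm_of_nonneg (exp_pos _).le, Real.norm_of_nonneg (hm'.trans_le hden).le]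
  have hC : 0 ≤ C := (abs_nonneg c).trans hc
  gcongr
  exact rpow_le_rpow_add_rpow hx hsq hqu

section ParametricIntegral

variable {X : Type*} [TopologicalSpace X] [FirstCountableTopology X] {c q b m n : X → ℝ} {x₀ : X}

lemma continuousAt_setIntegral_Ioi_mul_rpow_mul_exp_div
    (hc : ContinuousAt c x₀) (hq : ContinuousAt q x₀) (hb : ContinuousAt b x₀)
    (hm : ContinuousAt m x₀) (hn : ContinuousAt n x₀)
    (hq₀ : -1 < q x₀) (hb₀ : 0 < b x₀) (hm₀ : 0 < m x₀) (hn₀ : 0 < n x₀) :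
    ContinuousAt
      (fun p => ∫ x in Ioi 0, c p * x ^ q p * exp (-b p * x) / (m p + n p * x)) x₀ := by
  obtain ⟨s, hs, hsq⟩ := exists_between hq₀
  obtain ⟨u, hqu⟩ := exists_gt (q x₀)
  have hnear : ∀ᶠ p in 𝓝 x₀, |c p| < |c x₀| + 1 ∧ s < q p ∧ q p < u ∧ b x₀ / 2 < b p ∧
      m x₀ / 2 < m p ∧ 0 < n p :=
    (hc.abs.eventually_lt continuousAt_const (lt_add_one _)).and <|
      (hq.eventually_const_lt hsq).and <| (hq.eventually_lt_const hqu).and <|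
      (hb.eventually_const_lt (by linarith)).and <| (hm.eventually_const_lt (by linarith)).and <|
      hn.eventually_const_lt hn₀
  refine continuousAt_of_dominated
    (bound := fun x => (|c x₀| + 1) * (x ^ s + x ^ u) * exp (-(b x₀ / 2) * x) / (m x₀ / 2))
    (Eventually.of_forall fun p => (by fun_prop : Measurable _).aestronglyMeasurable) ?_ ?_ ?_
  · filter_upwards [hnear] with p ⟨hcp, hsp, hup, hbp, hmp, hnp⟩
    filter_upwards [ae_restrict_mem measurableSet_Ioi] with x hx
    exact norm_mul_rpow_mul_exp_div_le hx hcp.le hsp.le hup.le hbp.le (by linarith) hmp.le hnp.le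
  · have hb' : 0 < b x₀ / 2 := by linarith
    refine (((integrableOn_rpow_mul_exp_neg_mul hs hb').add
      (integrableOn_rpow_mul_exp_neg_mul (by linarith) hb')).const_mul
      ((|c x₀| + 1) / (m x₀ / 2))).congr (ae_of_all _ fun x => ?_)
    simp only [Pi.add_apply]
    ring
  · filter_upwards [ae_restrict_mem measurableSet_Ioi] with x hx
    have hden : m x₀ + n x₀ * x ≠ 0 := by nlinarith [mem_Ioi.mp hx]
    exact ((hc.mul ((continuousAt_const_rpow (ne_of_gt hx)).comp hq)).mul
      (hb.neg.mul continuousAt_const).rexp).div (hm.add (hn.mul continuousAt_const)) hden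

end ParametricIntegral

noncomputable def paramQ (p : ℝ × ℝ × ℝ × ℝ × ℝ × ℝ × ℝ × ℝ) : ℝ :=
  2 * p.1 / p.2.2.2.2.2.2.1 ^ 2 - 1

noncomputable def paramA (p : ℝ × ℝ × ℝ × ℝ × ℝ × ℝ × ℝ × ℝ) : ℝ :=
  2 * p.2.2.1 / p.2.2.2.2.2.2.1 ^ 2

lemma lamP_eq : lamP = fun p => (-p.2.1 - p.2.2.2.2.2.2.2 ^ 2 / 2) +
    (paramA p ^ paramQ p / Gamma (paramQ p)) *
      ∫ x in Ioi 0, p.2.2.2.1 * x ^ paramQ p * exp (-paramA p * x) /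
        (p.2.2.2.2.1 + p.2.2.2.2.2.1 * x) :=
  rfl

/-- the threshold `λ` is a continuous function of the parameters on `D`. -/
theorem stmt14 : ContinuousOn lamP paramD := by
  rintro p ⟨-, -, hb₁, -, hm₁, hm₂, hα, ha₁⟩
  have hα2 : 0 < p.2.2.2.2.2.2.1 ^ 2 := by positivity
  have hq : ContinuousAt paramQ p := by unfold paramQ; fun_prop (disch := positivity)
  have ha : ContinuousAt paramA p := by unfold paramA; fun_prop (disch := positivity)
  have hq₀ : 0 < paramQ p := by
    rw [paramQ, sub_pos, one_lt_div hα2]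
    linarith
  have ha₀ : 0 < paramA p := by unfold paramA; positivity
  have hΓ : ContinuousAt (fun p => Gamma (paramQ p)) p :=
    (differentiableOn_Gamma_Ioi.continuousOn.continuousAt (Ioi_mem_nhds hq₀)).comp hq
  have hI := continuousAt_setIntegral_Ioi_mul_rpow_mul_exp_div (c := fun p => p.2.2.2.1)
    (m := fun p => p.2.2.2.2.1) (n := fun p => p.2.2.2.2.2.1) (by fun_prop) hq ha (by fun_prop)
    (by fun_prop) (by linarith) ha₀ hm₁ hm₂
  rw [lamP_eq]
  exact ((by fun_prop : ContinuousAt (fun p : ℝ × ℝ × ℝ × ℝ × ℝ × ℝ × ℝ × ℝ =>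
    -p.2.1 - p.2.2.2.2.2.2.2 ^ 2 / 2) p).add (((ha.rpow hq (.inl ha₀.ne')).div hΓ
      (Gamma_pos_of_pos hq₀).ne').mul hI)).continuousWithinAt
end
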